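/- Composition of Bayesian inversions is a Bayesian inversion: let q_1: X_2 ⇝ X_1 be a Bayesian inversion of p_1: X_1 ⇝ X_2 relative to μ_1 ∈ P(X_1), and let q_2: X_3 ⇝ X_2 be a Bayesian inversion of p_2: X_2 ⇝ X_3 relative to (p_1)_* μ_1. Then q_1 ∘ q_2 : X_3 ⇝ X_1 is a Bayesian inversion of p_2 ∘ p_1 relative to μ_1. -/

import Mathlib

open MeasureTheory ProbabilityTheory

/-- The pushforward of a measure `ν` on `X` along the graph kernel
`Γ_T : x ↦ δ_x ⊗ T(·|x)` of a kernel `T : X ⇝ Y`. -/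
noncomputable def graphJoint {X Y : Type*} [MeasurableSpace X] [MeasurableSpace Y]
    (ν : Measure X) (T : Kernel X Y) : Measure (X × Y) :=
  ν.bind (fun x => (Measure.dirac x).prod (T x))

/-- `q : Y ⇝ X` is a Bayesian inversion of `p : X ⇝ Y` relative to `μ ∈ P(X)`:
`σ_*((Γ_q)_*(p_* μ)) = (Γ_p)_* μ`, where `σ` swaps the factors and
`p_* μ = μ.bind p`. -/
noncomputable def IsBayesianInversion {X Y : Type*} [MeasurableSpace X] [MeasurableSpace Y]
    (p : Kernel X Y) (μ : Measure X) (q : Kernel Y X) : Prop :=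
  (graphJoint (μ.bind (p : X → Measure Y)) q).map Prod.swap = graphJoint μ p

/-!
A Bayesian inversion is an adjoint: `q` inverts `p` relative to `μ` exactly when
`∫ g · (q f) d(p_* μ) = ∫ f · (p g) dμ` for all nonnegative measurable `f`, `g` (test on
indicators of rectangles for the converse). Adjoints compose in the reverse order, and
`(p₂ ∘ p₁)_* μ₁ = (p₂)_* (p₁)_* μ₁`, so `q₁ ∘ q₂` is adjoint to `p₂ ∘ p₁`.
-/

section

variable {X Y : Type*} [MeasurableSpace X] [MeasurableSpace Y]

lemma graphJoint_eq_compProd (ν : Measure X) [SFinite ν] (T : Kernel X Y) [IsSFiniteKernel T] :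
    graphJoint ν T = ν ⊗ₘ T := by
  have hgraph : (fun x => (Measure.dirac x).prod (T x)) = fun x => (Kernel.id ×ₖ T) x := by
    funext x; rw [Kernel.prod_apply, Kernel.id_apply]
  ext s hs
  rw [graphJoint, hgraph, Measure.bind_apply hs (Kernel.id ×ₖ T).measurable.aemeasurable,
    Measure.compProd_apply hs]
  congr 1; funext x
  rw [Kernel.prod_apply, Kernel.id_apply, Measure.dirac_prod,
    Measure.map_apply measurable_prodMk_left hs]

lemma Measure.lintegral_compProd_mul (μ : Measure X) [SFinite μ] (κ : Kernel X Y)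
    [IsSFiniteKernel κ] {f : X → ENNReal} {g : Y → ENNReal} (hf : Measurable f)
    (hg : Measurable g) :
    ∫⁻ w, f w.1 * g w.2 ∂(μ ⊗ₘ κ) = ∫⁻ x, f x * ∫⁻ y, g y ∂κ x ∂μ := by
  rw [Measure.lintegral_compProd (by fun_prop)]
  exact lintegral_congr fun x => lintegral_const_mul (f x) hg

lemma Measure.apply_prod_eq_lintegral_indicator_mul (ρ : Measure (X × Y)) {A : Set X}
    {C : Set Y} (hA : MeasurableSet A) (hC : MeasurableSet C) :
    ρ (A ×ˢ C) = ∫⁻ w, A.indicator 1 w.1 * C.indicator 1 w.2 ∂ρ := by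
  rw [← lintegral_indicator_one (hA.prod hC)]
  exact lintegral_congr fun w => Set.indicator_prod_one

variable {p : Kernel X Y} {μ : Measure X} {q : Kernel Y X}

lemma IsBayesianInversion.lintegral_mul [SFinite μ] [IsSFiniteKernel p] [IsSFiniteKernel q]
    (h : IsBayesianInversion p μ q) {f : X → ENNReal} {g : Y → ENNReal} (hf : Measurable f)
    (hg : Measurable g) :
    ∫⁻ y, g y * ∫⁻ x, f x ∂q y ∂(p ∘ₘ μ) = ∫⁻ x, f x * ∫⁻ y, g y ∂p x ∂μ := by
  rw [IsBayesianInversion, graphJoint_eq_compProd, graphJoint_eq_compProd] at h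
  rw [← Measure.lintegral_compProd_mul _ _ hg hf, ← Measure.lintegral_compProd_mul _ _ hf hg,
    ← h, lintegral_map (by fun_prop) measurable_swap]
  simp only [Prod.fst_swap, Prod.snd_swap, mul_comm]

lemma isBayesianInversion_of_lintegral_mul [IsFiniteMeasure μ] [IsFiniteKernel p]
    [IsSFiniteKernel q]
    (h : ∀ f : X → ENNReal, ∀ g : Y → ENNReal, Measurable f → Measurable g →
      ∫⁻ y, g y * ∫⁻ x, f x ∂q y ∂(p ∘ₘ μ) = ∫⁻ x, f x * ∫⁻ y, g y ∂p x ∂μ) :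
    IsBayesianInversion p μ q := by
  rw [IsBayesianInversion, graphJoint_eq_compProd, graphJoint_eq_compProd]
  refine (Measure.ext_prod fun {A C} hA hC => ?_).symm
  have hfA : Measurable (A.indicator (1 : X → ENNReal)) := measurable_one.indicator hA
  have hgC : Measurable (C.indicator (1 : Y → ENNReal)) := measurable_one.indicator hC
  rw [Measure.map_apply measurable_swap (hA.prod hC), Set.preimage_swap_prod,
    Measure.apply_prod_eq_lintegral_indicator_mul _ hA hC,
    Measure.apply_prod_eq_lintegral_indicator_mul _ hC hA,
    Measure.lintegral_compProd_mul _ _ hfA hgC, Measure.lintegral_compProd_mul _ _ hgC hfA,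
    h _ _ hfA hgC]

end

/-- Composition of Bayesian inversions is a Bayesian inversion: if `q₁ : X₂ ⇝ X₁` is a
Bayesian inversion of `p₁ : X₁ ⇝ X₂` relative to `μ₁ ∈ P(X₁)` and `q₂ : X₃ ⇝ X₂` is a
Bayesian inversion of `p₂ : X₂ ⇝ X₃` relative to `(p₁)_* μ₁`, then `q₁ ∘ q₂ : X₃ ⇝ X₁`
is a Bayesian inversion of `p₂ ∘ p₁` relative to `μ₁`. -/
theorem bayesianInversion_comp {X₁ X₂ X₃ : Type*}
    [MeasurableSpace X₁] [MeasurableSpace X₂] [MeasurableSpace X₃]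
    (p₁ : Kernel X₁ X₂) [IsMarkovKernel p₁] (p₂ : Kernel X₂ X₃) [IsMarkovKernel p₂]
    (μ₁ : Measure X₁) [IsProbabilityMeasure μ₁]
    (q₁ : Kernel X₂ X₁) [IsMarkovKernel q₁] (q₂ : Kernel X₃ X₂) [IsMarkovKernel q₂]
    (hq₁ : IsBayesianInversion p₁ μ₁ q₁)
    (hq₂ : IsBayesianInversion p₂ (μ₁.bind (p₁ : X₁ → Measure X₂)) q₂) :
    IsBayesianInversion (p₂ ∘ₖ p₁) μ₁ (q₁ ∘ₖ q₂) := by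
  refine isBayesianInversion_of_lintegral_mul fun f g hf hg => ?_
  rw [← Measure.comp_assoc]
  calc ∫⁻ z, g z * ∫⁻ x, f x ∂(q₁ ∘ₖ q₂) z ∂(p₂ ∘ₘ (p₁ ∘ₘ μ₁))
      = ∫⁻ z, g z * ∫⁻ y, ∫⁻ x, f x ∂q₁ y ∂q₂ z ∂(p₂ ∘ₘ (p₁ ∘ₘ μ₁)) := by
        simp_rw [Kernel.lintegral_comp _ _ _ hf]
    _ = ∫⁻ y, (∫⁻ x, f x ∂q₁ y) * ∫⁻ z, g z ∂p₂ y ∂(p₁ ∘ₘ μ₁) :=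
        hq₂.lintegral_mul hf.lintegral_kernel hg
    _ = ∫⁻ y, (∫⁻ z, g z ∂p₂ y) * ∫⁻ x, f x ∂q₁ y ∂(p₁ ∘ₘ μ₁) := by
        simp_rw [mul_comm]
    _ = ∫⁻ x, f x * ∫⁻ y, ∫⁻ z, g z ∂p₂ y ∂p₁ x ∂μ₁ :=
        hq₁.lintegral_mul hf hg.lintegral_kernel
    _ = ∫⁻ x, f x * ∫⁻ z, g z ∂(p₂ ∘ₖ p₁) x ∂μ₁ := by
        simp_rw [Kernel.lintegral_comp _ _ _ hg]
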